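/- arXiv:1910.02179 — 7 statements merged into one kernel-verified Lean document; each statement's English description precedes it below -/
import Mathlib

section
/- Let G be a finite simple graph and let m be a positive integer. Then G is a minor of the complete bipartite graph K_{m,m} if and only if there exists a bipartite assignment of G into K_{m,m}. (This is the certificate of embeddability for the Bipartite Template Embedding: the integer program with objective value |V(G)| has a solution exactly when G embeds.) -/
/-- A minor model of `G` in `H`: a family of pairwise disjoint nonempty branch sets,
each inducing a connected subgraph of `H`, with an edge of `H` joining the branch sets
of any two adjacent vertices of `G`. -/
structure MinorModel {V W : Type*} (G : SimpleGraph V) (H : SimpleGraph W) where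
  B : V → Set W
  nonempty : ∀ v, (B v).Nonempty
  pairwiseDisjoint : ∀ ⦃u v : V⦄, u ≠ v → Disjoint (B u) (B v)
  connected : ∀ v, (H.induce (B v)).Connected
  edge : ∀ ⦃u v : V⦄, G.Adj u v → ∃ x ∈ B u, ∃ y ∈ B v, H.Adj x y

/-- `G` is a minor of `H`. -/
def SimpleGraph.IsMinorOf {V W : Type*} (G : SimpleGraph V) (H : SimpleGraph W) : Prop :=
  Nonempty (MinorModel G H)

/-- A bipartite assignment of `G` into the complete bipartite graph `K_{m1,m2}`. -/
def SimpleGraph.BipartiteAssignment {V : Type*} (G : SimpleGraph V) (m1 m2 : ℕ)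
    (A1 A2 : Set V) : Prop :=
  A1 ∪ A2 = Set.univ ∧ A1.ncard ≤ m1 ∧ A2.ncard ≤ m2 ∧
    ∀ ⦃u v : V⦄, G.Adj u v → (u ∈ A1 ∧ v ∈ A2) ∨ (u ∈ A2 ∧ v ∈ A1)

/-- `G − S` is bipartite, i.e. `S` is an odd cycle transversal of `G`. -/
def SimpleGraph.DelBipartite {V : Type*} (G : SimpleGraph V) (S : Set V) : Prop :=
  ∃ X Y : Set V, Disjoint X Y ∧ X ∪ Y = Sᶜ ∧
    ∀ ⦃u v : V⦄, G.Adj u v → u ∉ S → v ∉ S → (u ∈ X ∧ v ∈ Y) ∨ (u ∈ Y ∧ v ∈ X)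

/-- For a positive integer `m`, a finite simple graph `G` is a minor of the
complete bipartite graph `K_{m,m}` if and only if there exists a bipartite assignment of
`G` into `K_{m,m}`. -/
theorem stmt1 {V : Type*} [Fintype V] (G : SimpleGraph V) (m : ℕ) (hm : 0 < m) :
    G.IsMinorOf (completeBipartiteGraph (Fin m) (Fin m)) ↔
      ∃ A1 A2 : Set V, G.BipartiteAssignment m m A1 A2 := by
  classical
  constructor
  · rintro ⟨M⟩
    refine ⟨{v | ∃ i, Sum.inl i ∈ M.B v}, {v | ∃ j, Sum.inr j ∈ M.B v}, ?_, ?_, ?_, ?_⟩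
    · ext v
      simp only [Set.mem_union, Set.mem_setOf_eq, Set.mem_univ, iff_true]
      obtain ⟨x, hx⟩ := M.nonempty v
      cases x with
      | inl i => exact Or.inl ⟨i, hx⟩
      | inr j => exact Or.inr ⟨j, hx⟩
    · have : Function.Injective (fun v : {v | ∃ i, Sum.inl i ∈ M.B v} =>
          Classical.choose v.2) := by
        intro u v huv
        by_contra hne
        have h1 := Classical.choose_spec u.2
        have h2 := Classical.choose_spec v.2
        dsimp only at huv
        rw [huv] at h1
        exact (M.pairwiseDisjoint (fun h => hne (Subtype.ext h))).le_bot ⟨h1, h2⟩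
      calc _ = Nat.card {v | ∃ i, Sum.inl i ∈ M.B v} := (Nat.card_coe_set_eq _).symm
        _ ≤ Nat.card (Fin m) := Nat.card_le_card_of_injective _ this
        _ = m := by simp
    · have : Function.Injective (fun v : {v | ∃ j, Sum.inr j ∈ M.B v} =>
          Classical.choose v.2) := by
        intro u v huv
        by_contra hne
        have h1 := Classical.choose_spec u.2
        have h2 := Classical.choose_spec v.2
        dsimp only at huv
        rw [huv] at h1
        exact (M.pairwiseDisjoint (fun h => hne (Subtype.ext h))).le_bot ⟨h1, h2⟩
      calc _ = Nat.card {v | ∃ j, Sum.inr j ∈ M.B v} := (Nat.card_coe_set_eq _).symm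
        _ ≤ Nat.card (Fin m) := Nat.card_le_card_of_injective _ this
        _ = m := by simp
    · intro u v huv
      obtain ⟨x, hx, y, hy, hadj⟩ := M.edge huv
      cases x with
      | inl i =>
        cases y with
        | inl j => simp [completeBipartiteGraph] at hadj
        | inr j => exact Or.inl ⟨⟨i, hx⟩, ⟨j, hy⟩⟩
      | inr i =>
        cases y with
        | inl j => exact Or.inr ⟨⟨i, hx⟩, ⟨j, hy⟩⟩
        | inr j => simp [completeBipartiteGraph] at hadj
  · rintro ⟨A1, A2, hU, h1, h2, hE⟩
    have hf : Nonempty (A1 ↪ Fin m) := by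
      apply Function.Embedding.nonempty_of_card_le
      rwa [Fintype.card_fin, ← Nat.card_eq_fintype_card, Nat.card_coe_set_eq]
    have hg : Nonempty (A2 ↪ Fin m) := by
      apply Function.Embedding.nonempty_of_card_le
      rwa [Fintype.card_fin, ← Nat.card_eq_fintype_card, Nat.card_coe_set_eq]
    obtain ⟨f⟩ := hf
    obtain ⟨g⟩ := hg
    set B : V → Set (Fin m ⊕ Fin m) := fun v =>
      {x | (∃ h : v ∈ A1, x = Sum.inl (f ⟨v, h⟩)) ∨ (∃ h : v ∈ A2, x = Sum.inr (g ⟨v, h⟩))}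
      with hB
    have hmem : ∀ v : V, v ∈ A1 ∨ v ∈ A2 := by
      intro v
      have : v ∈ A1 ∪ A2 := by rw [hU]; trivial
      exact this
    refine ⟨⟨B, ?_, ?_, ?_, ?_⟩⟩
    · intro v
      rcases hmem v with h | h
      · exact ⟨Sum.inl (f ⟨v, h⟩), Or.inl ⟨h, rfl⟩⟩
      · exact ⟨Sum.inr (g ⟨v, h⟩), Or.inr ⟨h, rfl⟩⟩
    · intro u v hne
      rw [Set.disjoint_left]
      rintro x (⟨hu, rfl⟩ | ⟨hu, rfl⟩) (⟨hv, h⟩ | ⟨hv, h⟩)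
      · exact hne (Subtype.ext_iff.mp (f.injective (Sum.inl.inj h.symm))).symm
      · exact absurd h.symm (by simp)
      · exact absurd h.symm (by simp)
      · exact hne (Subtype.ext_iff.mp (g.injective (Sum.inr.inj h.symm))).symm
    · intro v
      rw [SimpleGraph.connected_iff]
      constructor
      · rintro ⟨x, hx⟩ ⟨y, hy⟩
        rcases hx with ⟨hv1, hx⟩ | ⟨hv2, hx⟩ <;> rcases hy with ⟨hv1', hy⟩ | ⟨hv2', hy⟩
        · have hxy : x = y := by rw [hx, hy]
          subst hxy
          exact SimpleGraph.Reachable.refl _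
        · exact SimpleGraph.Adj.reachable (by subst hx; subst hy; simp [completeBipartiteGraph])
        · exact SimpleGraph.Adj.reachable (by subst hx; subst hy; simp [completeBipartiteGraph])
        · have hxy : x = y := by rw [hx, hy]
          subst hxy
          exact SimpleGraph.Reachable.refl _
      · rcases hmem v with h | h
        · exact ⟨⟨Sum.inl (f ⟨v, h⟩), Or.inl ⟨h, rfl⟩⟩⟩
        · exact ⟨⟨Sum.inr (g ⟨v, h⟩), Or.inr ⟨h, rfl⟩⟩⟩
    · intro u v huv
      rcases hE huv with ⟨hu, hv⟩ | ⟨hu, hv⟩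
      · exact ⟨Sum.inl (f ⟨u, hu⟩), Or.inl ⟨hu, rfl⟩, Sum.inr (g ⟨v, hv⟩), Or.inr ⟨hv, rfl⟩,
          by simp [completeBipartiteGraph]⟩
      · exact ⟨Sum.inr (g ⟨u, hu⟩), Or.inr ⟨hu, rfl⟩, Sum.inl (f ⟨v, hv⟩), Or.inl ⟨hv, rfl⟩,
          by simp [completeBipartiteGraph]⟩
end

section
/- Let G be a finite simple graph and m1, m2 natural numbers. If G is a minor of the complete bipartite graph K_{m1,m2}, then G admits a minor model in K_{m1,m2} in which every branch set contains at most one vertex of each of the two parts of K_{m1,m2}; in particular, every branch set has size at most 2. -/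
lemma pair_conn {W : Type*} (H : SimpleGraph W) {a b : W} (hab : H.Adj a b) :
    (H.induce {a, b}).Connected := by
  have ha : a ∈ ({a, b} : Set W) := by simp
  haveI : Nonempty ({a, b} : Set W) := ⟨⟨a, ha⟩⟩
  refine ⟨fun x y => ?_⟩
  have key : ∀ z : ({a, b} : Set W), (H.induce {a, b}).Reachable ⟨a, ha⟩ z := by
    rintro ⟨z, hz⟩
    rcases hz with rfl | rfl
    · rfl
    · exact SimpleGraph.Adj.reachable (by simpa using hab)
  exact (key x).symm.trans (key y)

lemma conn_two_sides {α β : Type*} {S : Set (α ⊕ β)}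
    (hc : ((completeBipartiteGraph α β).induce S).Connected)
    (hns : ¬ S.Subsingleton) :
    (∃ l ∈ S, l.isLeft = true) ∧ (∃ r ∈ S, r.isRight = true) := by
  rw [Set.not_subsingleton_iff] at hns
  obtain ⟨x, hx, y, hy, hxy⟩ := hns
  obtain ⟨w⟩ := hc.preconnected ⟨x, hx⟩ ⟨y, hy⟩
  have hnn : ¬ w.Nil := by
    intro hn
    exact hxy (congrArg Subtype.val (hn.eq))
  have hadj := w.adj_snd hnn
  simp only [SimpleGraph.comap_adj, SimpleGraph.induce_eq_coe_induce_top] at hadj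
  have hadj' : (completeBipartiteGraph α β).Adj x (w.getVert 1 : α ⊕ β) := by
    simpa using hadj.2
  have hmem : (w.getVert 1 : α ⊕ β) ∈ S := (w.getVert 1).2
  rcases hadj' with ⟨h1, h2⟩ | ⟨h1, h2⟩
  · exact ⟨⟨x, hx, h1⟩, ⟨_, hmem, h2⟩⟩
  · exact ⟨⟨_, hmem, h2⟩, ⟨x, hx, h1⟩⟩

lemma shrink {α β : Type*} {S : Set (α ⊕ β)} (hne : S.Nonempty)
    (hc : ((completeBipartiteGraph α β).induce S).Connected) :
    ∃ T : Set (α ⊕ β), T ⊆ S ∧ T.Nonempty ∧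
      ((completeBipartiteGraph α β).induce T).Connected ∧
      {x ∈ T | x.isLeft}.Subsingleton ∧ {x ∈ T | x.isRight}.Subsingleton ∧
      T.ncard ≤ 2 ∧
      (∀ x ∈ S, x.isLeft = true → ∃ y ∈ T, y.isLeft = true) ∧
      (∀ x ∈ S, x.isRight = true → ∃ y ∈ T, y.isRight = true) := by
  by_cases hss : S.Subsingleton
  · obtain ⟨a, ha⟩ := hne
    have hSa : S = {a} := hss.eq_singleton_of_mem ha
    refine ⟨S, le_refl _, ⟨a, ha⟩, hc, fun x hx y hy => hss hx.1 hy.1,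
      fun x hx y hy => hss hx.1 hy.1, ?_, fun x hx hl => ⟨x, hx, hl⟩,
      fun x hx hr => ⟨x, hx, hr⟩⟩
    rw [hSa, Set.ncard_singleton]; omega
  · obtain ⟨⟨l, hl, hll⟩, ⟨r, hr, hrr⟩⟩ := conn_two_sides hc hss
    obtain ⟨la, rfl⟩ := Sum.isLeft_iff.mp hll
    obtain ⟨rb, rfl⟩ := Sum.isRight_iff.mp hrr
    have hlr : (completeBipartiteGraph α β).Adj (Sum.inl la) (Sum.inr rb) := Or.inl ⟨hll, hrr⟩
    refine ⟨{Sum.inl la, Sum.inr rb}, ?_, ⟨Sum.inl la, by simp⟩, pair_conn _ hlr, ?_, ?_, ?_, ?_, ?_⟩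
    · rintro z (rfl | rfl) <;> assumption
    · rintro x ⟨(rfl | rfl), hx⟩ y ⟨(rfl | rfl), hy⟩ <;>
        simp_all
    · rintro x ⟨(rfl | rfl), hx⟩ y ⟨(rfl | rfl), hy⟩ <;>
        simp_all
    · exact (Set.ncard_insert_le _ _).trans (by rw [Set.ncard_singleton])
    · exact fun x _ _ => ⟨Sum.inl la, by simp, hll⟩
    · exact fun x _ _ => ⟨Sum.inr rb, by simp, hrr⟩


/-- If a finite simple graph `G` is a minor of `K_{m1,m2}`, then `G` admits a
minor model in `K_{m1,m2}` in which every branch set contains at most one vertex of each of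
the two parts; in particular, every branch set has size at most 2. -/
theorem stmt2 {V : Type*} [Fintype V] (G : SimpleGraph V) (m1 m2 : ℕ)
    (h : G.IsMinorOf (completeBipartiteGraph (Fin m1) (Fin m2))) :
    ∃ M : MinorModel G (completeBipartiteGraph (Fin m1) (Fin m2)),
      ∀ v : V, {x ∈ M.B v | x.isLeft}.Subsingleton ∧
        {x ∈ M.B v | x.isRight}.Subsingleton ∧ (M.B v).ncard ≤ 2 := by
  obtain ⟨M⟩ := h
  choose B' hsub hne hconn hL hR hcard hl hr using
    fun v => shrink (M.nonempty v) (M.connected v)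
  refine ⟨⟨B', hne, fun u v huv => (M.pairwiseDisjoint huv).mono (hsub u) (hsub v),
    hconn, ?_⟩, fun v => ⟨hL v, hR v, hcard v⟩⟩
  intro u v huv
  obtain ⟨x, hx, y, hy, hadj⟩ := M.edge huv
  rcases hadj with ⟨h1, h2⟩ | ⟨h1, h2⟩
  · obtain ⟨x', hx', hx'l⟩ := hl u x hx h1
    obtain ⟨y', hy', hy'r⟩ := hr v y hy h2
    exact ⟨x', hx', y', hy', Or.inl ⟨hx'l, hy'r⟩⟩
  · obtain ⟨x', hx', hx'r⟩ := hr u x hx h1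
    obtain ⟨y', hy', hy'l⟩ := hl v y hy h2
    exact ⟨x', hx', y', hy', Or.inr ⟨hx'r, hy'l⟩⟩
end

section
/- Let G be a finite simple graph and m1, m2 natural numbers. If G is a minor of the complete bipartite graph K_{m1,m2}, then there exists a set S ⊆ V(G) such that G − S is bipartite, |S| ≤ min(m1, m2), and |V(G)| + |S| ≤ m1 + m2. In particular, if t denotes the minimum size of an odd cycle transversal of G, then any complete bipartite graph K_{m1,m2} containing G as a minor has m1 + m2 ≥ |V(G)| + t. -/
/-!
Split the vertices of `K_{m1,m2}` into its sides `A` and `Aᶜ`, and let `S` be the set of vertices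
of `G` whose branch set meets both sides. Since branch sets are
disjoint, choosing a point of each branch set inside `A` shows that at most `|A|` branch sets meet
`A`, and likewise for `Aᶜ`. Every branch set meets some side, so inclusion–exclusion gives
`|V(G)| + |S| ≤ |A| + |Aᶜ|`. Outside `S` every vertex lies on exactly one side, and an edge of
`G` comes from an edge of `K_{m1,m2}`, which joins the two sides; so the sides give a
bipartition of `G − S`.
-/

open Set

namespace SimpleGraph

variable {V : Type*} (G : SimpleGraph V)

theorem delBipartite_inter {L R : Set V} (hcover : L ∪ R = univ)
    (hadj : ∀ ⦃u v⦄, G.Adj u v → (u ∈ L ∧ v ∈ R) ∨ (u ∈ R ∧ v ∈ L)) :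
    G.DelBipartite (L ∩ R) := by
  refine ⟨L \ R, R \ L, disjoint_sdiff_sdiff, ?_, ?_⟩
  · ext v
    have hv : v ∈ L ∨ v ∈ R := by simp [← mem_union, hcover]
    simp only [mem_union, mem_sdiff, mem_compl_iff, mem_inter_iff]
    tauto
  · intro u v huv hu hv
    simp only [mem_inter_iff, not_and_or] at hu hv
    simp only [mem_sdiff]
    rcases hadj huv with h | h <;> tauto

end SimpleGraph

namespace MinorModel

variable {V W : Type*} {G : SimpleGraph V} {H : SimpleGraph W} (M : MinorModel G H)

def meeting (A : Set W) : Set V := {v | (M.B v ∩ A).Nonempty}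

theorem ncard_meeting_le {A : Set W} (hA : A.Finite) : (M.meeting A).ncard ≤ A.ncard := by
  rcases (M.meeting A).eq_empty_or_nonempty with h | ⟨-, x, -⟩
  · simp [h]
  have : Nonempty W := ⟨x⟩
  choose! pick hpick using fun v (hv : v ∈ M.meeting A) => hv
  refine ncard_le_ncard_of_injOn pick (fun v hv => (hpick v hv).2) ?_ hA
  intro u hu v hv huv
  by_contra hne
  exact (M.pairwiseDisjoint hne).ne_of_mem (hpick u hu).1 (hpick v hv).1 huv

theorem meeting_union_meeting_compl (A : Set W) : M.meeting A ∪ M.meeting Aᶜ = univ := by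
  refine eq_univ_of_forall fun v => ?_
  obtain ⟨x, hx⟩ := M.nonempty v
  by_cases hxA : x ∈ A
  · exact Or.inl ⟨x, hx, hxA⟩
  · exact Or.inr ⟨x, hx, hxA⟩

theorem adj_meeting_range_inl {α β : Type*}
    (M : MinorModel G (completeBipartiteGraph α β)) ⦃u v : V⦄ (huv : G.Adj u v) :
    (u ∈ M.meeting (range Sum.inl) ∧ v ∈ M.meeting (range Sum.inl)ᶜ) ∨
      (u ∈ M.meeting (range Sum.inl)ᶜ ∧ v ∈ M.meeting (range Sum.inl)) := by
  obtain ⟨x, hx, y, hy, hxy⟩ := M.edge huv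
  rcases x with a | b <;> rcases y with a' | b' <;>
    simp only [completeBipartiteGraph_adj, Sum.isLeft_inl, Sum.isLeft_inr, Sum.isRight_inl,
      Sum.isRight_inr, Bool.false_eq_true, and_false, false_and, or_self] at hxy
  · exact Or.inl ⟨⟨_, hx, a, rfl⟩, ⟨_, hy, fun ⟨_, h⟩ => Sum.inl_ne_inr h⟩⟩
  · exact Or.inr ⟨⟨_, hx, fun ⟨_, h⟩ => Sum.inl_ne_inr h⟩, ⟨_, hy, a', rfl⟩⟩

end MinorModel

/-- If a finite simple graph `G` is a minor of `K_{m1,m2}`, then there is an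
odd cycle transversal `S` of `G` with `|S| ≤ min m1 m2` and `|V(G)| + |S| ≤ m1 + m2`.
In particular, `m1 + m2 ≥ |V(G)| + t`, where `t` is the minimum size of an odd cycle
transversal of `G`. -/
theorem stmt3 {V : Type*} [Fintype V] (G : SimpleGraph V) (m1 m2 : ℕ)
    (h : G.IsMinorOf (completeBipartiteGraph (Fin m1) (Fin m2))) :
    (∃ S : Set V, G.DelBipartite S ∧ S.ncard ≤ min m1 m2 ∧
      Fintype.card V + S.ncard ≤ m1 + m2) ∧
    Fintype.card V + sInf {n : ℕ | ∃ S : Set V, G.DelBipartite S ∧ S.ncard = n} ≤ m1 + m2 := by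
  obtain ⟨M⟩ := h
  set L := M.meeting (range Sum.inl)
  set R := M.meeting (range Sum.inl)ᶜ
  have hL : L.ncard ≤ m1 := (M.ncard_meeting_le (toFinite _)).trans_eq <| by
    rw [ncard_range_of_injective Sum.inl_injective, Nat.card_fin]
  have hR : R.ncard ≤ m2 := (M.ncard_meeting_le (toFinite _)).trans_eq <| by
    rw [compl_range_inl, ncard_range_of_injective Sum.inr_injective, Nat.card_fin]
  have hcover : L ∪ R = univ := M.meeting_union_meeting_compl _
  have hcard : Fintype.card V + (L ∩ R).ncard = L.ncard + R.ncard := by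
    rw [← Nat.card_eq_fintype_card, ← ncard_univ, ← hcover, ncard_union_add_ncard_inter]
  have hS : G.DelBipartite (L ∩ R) := G.delBipartite_inter hcover M.adj_meeting_range_inl
  refine ⟨⟨L ∩ R, hS, le_min ((ncard_inter_le_ncard_left _ _).trans hL)
    ((ncard_inter_le_ncard_right _ _).trans hR), by omega⟩, ?_⟩
  have : sInf {n | ∃ S, G.DelBipartite S ∧ S.ncard = n} ≤ (L ∩ R).ncard := Nat.sInf_le ⟨_, hS, rfl⟩
  omega
end

section
/- Let m, m1, m2 be natural numbers with m > max(m1, m2). If (A1, A2) is a bipartite assignment of the star graph K_{1,m} into K_{m1,m2}, then the center vertex of the star belongs to A1 ∩ A2. Since K_{1,m} is bipartite (so the empty set is its minimum-size odd cycle transversal), in every such assignment the minimum odd cycle transversal is a proper subset of the set A1 ∩ A2 of vertices assigned to both parts. -/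
/-- Let `m > max m1 m2`. If `(A1, A2)` is a bipartite assignment of the star
graph `K_{1,m}` into `K_{m1,m2}`, then the center of the star belongs to `A1 ∩ A2`;
in particular the empty set (the minimum-size odd cycle transversal of the bipartite graph
`K_{1,m}`) is a proper subset of `A1 ∩ A2`. -/
theorem stmt5 (m m1 m2 : ℕ) (hm : max m1 m2 < m)
    (A1 A2 : Set (Fin 1 ⊕ Fin m))
    (h : (completeBipartiteGraph (Fin 1) (Fin m)).BipartiteAssignment m1 m2 A1 A2) :
    Sum.inl 0 ∈ A1 ∩ A2 ∧ (∅ : Set (Fin 1 ⊕ Fin m)) ⊂ A1 ∩ A2 := by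
  obtain ⟨hcov, h1, h2, hedge⟩ := h
  have hm1 : m1 < m := lt_of_le_of_lt (le_max_left _ _) hm
  have hm2 : m2 < m := lt_of_le_of_lt (le_max_right _ _) hm
  have hadj : ∀ j : Fin m, (completeBipartiteGraph (Fin 1) (Fin m)).Adj (Sum.inl 0) (Sum.inr j) := by
    intro j; simp
  have hrange : (Set.range (Sum.inr : Fin m → Fin 1 ⊕ Fin m)).ncard = m := by
    rw [Set.ncard_eq_toFinset_card', Set.toFinset_range]
    simp [Finset.card_image_of_injective _ Sum.inr_injective]
  have key : Sum.inl 0 ∈ A1 ∧ Sum.inl 0 ∈ A2 := by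
    constructor
    · by_contra hc
      have hsub : Set.range (Sum.inr : Fin m → Fin 1 ⊕ Fin m) ⊆ A1 := by
        rintro _ ⟨j, rfl⟩
        rcases hedge (hadj j) with ⟨h', _⟩ | ⟨_, h'⟩
        · exact absurd h' hc
        · exact h'
      have := Set.ncard_le_ncard hsub (Set.toFinite _)
      omega
    · by_contra hc
      have hsub : Set.range (Sum.inr : Fin m → Fin 1 ⊕ Fin m) ⊆ A2 := by
        rintro _ ⟨j, rfl⟩
        rcases hedge (hadj j) with ⟨_, h'⟩ | ⟨h', _⟩
        · exact h'
        · exact absurd h' hc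
      have := Set.ncard_le_ncard hsub (Set.toFinite _)
      omega
  refine ⟨⟨key.1, key.2⟩, ?_⟩
  exact (Set.empty_ssubset).mpr ⟨Sum.inl 0, key.1, key.2⟩
end

section
/- For all positive integers M and L, the complete bipartite graph K_{ML,ML} is a minor of the Chimera graph C_{M,M,L}: contracting, for each row i and each index l, the M right vertices (i, j, right, l) over all columns j into a single vertex, and, for each column j and each index l, the M left vertices (i, j, left, l) over all rows i into a single vertex, yields K_{ML,ML}. -/
/-- The Chimera graph `C_{M,M,L}`. A vertex `(i, j, s, l)` consists of a row `i`, a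
column `j`, a side `s` (`false` = left, `true` = right), and an index `l`.
Edges: within each cell, every left vertex is adjacent to every right vertex;
left vertices with the same column and index and rows differing by 1 are adjacent;
right vertices with the same row and index and columns differing by 1 are adjacent. -/
def chimera (M L : ℕ) : SimpleGraph (Fin M × Fin M × Bool × Fin L) :=
  SimpleGraph.fromRel fun x y =>
    (x.1 = y.1 ∧ x.2.1 = y.2.1 ∧ x.2.2.1 = false ∧ y.2.2.1 = true) ∨
    (x.2.2.1 = false ∧ y.2.2.1 = false ∧ x.2.1 = y.2.1 ∧ x.2.2.2 = y.2.2.2 ∧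
      ((x.1 : ℕ) + 1 = (y.1 : ℕ) ∨ (y.1 : ℕ) + 1 = (x.1 : ℕ))) ∨
    (x.2.2.1 = true ∧ y.2.2.1 = true ∧ x.1 = y.1 ∧ x.2.2.2 = y.2.2.2 ∧
      ((x.2.1 : ℕ) + 1 = (y.2.1 : ℕ) ∨ (y.2.1 : ℕ) + 1 = (x.2.1 : ℕ)))

lemma induce_chain_connected {V : Type*} (G : SimpleGraph V) (s : Set V) (M : ℕ) (hM : 0 < M)
    (f : ℕ → V) (hmem : ∀ i, i < M → f i ∈ s)
    (hsurj : ∀ x ∈ s, ∃ i, i < M ∧ f i = x)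
    (hadj : ∀ i, i + 1 < M → G.Adj (f i) (f (i + 1))) :
    (G.induce s).Connected := by
  have h0 : f 0 ∈ s := hmem 0 hM
  have key : ∀ n, ∀ h : n < M, (G.induce s).Reachable ⟨f n, hmem n h⟩ ⟨f 0, h0⟩ := by
    intro n
    induction n with
    | zero => intro h; exact SimpleGraph.Reachable.refl _
    | succ k ih =>
      intro h
      have hk : k < M := Nat.lt_of_succ_lt h
      have hadj' : (G.induce s).Adj ⟨f (k + 1), hmem _ h⟩ ⟨f k, hmem _ hk⟩ :=
        (hadj k h).symm
      exact hadj'.reachable.trans (ih hk)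
  rw [SimpleGraph.connected_iff]
  refine ⟨?_, ⟨⟨f 0, h0⟩⟩⟩
  · intro a b
    obtain ⟨i, hi, hfi⟩ := hsurj a a.2
    obtain ⟨j, hj, hfj⟩ := hsurj b b.2
    have ha : a = ⟨f i, hmem i hi⟩ := Subtype.ext hfi.symm
    have hb : b = ⟨f j, hmem j hj⟩ := Subtype.ext hfj.symm
    rw [ha, hb]
    exact (key i hi).trans (key j hj).symm


/-- For all positive integers `M` and `L`, the complete bipartite graph
`K_{ML,ML}` is a minor of the Chimera graph `C_{M,M,L}`. -/
theorem stmt12 (M L : ℕ) (hM : 0 < M) (hL : 0 < L) :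
    (completeBipartiteGraph (Fin (M * L)) (Fin (M * L))).IsMinorOf (chimera M L) := by
  classical
  set e : Fin (M * L) ≃ Fin M × Fin L := finProdFinEquiv.symm with he
  refine ⟨⟨fun v => Sum.elim
      (fun k => {x | x.2.1 = (e k).1 ∧ x.2.2.1 = false ∧ x.2.2.2 = (e k).2})
      (fun k => {x | x.1 = (e k).1 ∧ x.2.2.1 = true ∧ x.2.2.2 = (e k).2}) v,
      ?_, ?_, ?_, ?_⟩⟩
  · rintro (k | k)
    · exact ⟨(⟨0, hM⟩, (e k).1, false, (e k).2), rfl, rfl, rfl⟩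
    · exact ⟨((e k).1, ⟨0, hM⟩, true, (e k).2), rfl, rfl, rfl⟩
  · rintro (k | k) (k' | k') hne <;> rw [Set.disjoint_left] <;>
      rintro ⟨i, j, b, l⟩ ⟨h1, h2, h3⟩ ⟨h1', h2', h3'⟩
    · exact hne (congrArg Sum.inl (e.injective (Prod.ext (h1 ▸ h1') (h3 ▸ h3'))))
    · simp_all
    · simp_all
    · exact hne (congrArg Sum.inr (e.injective (Prod.ext (h1 ▸ h1') (h3 ▸ h3'))))
  · rintro (k | k)
    · apply induce_chain_connected (M := M) (hM := hM)
        (f := fun i => (⟨i % M, Nat.mod_lt _ hM⟩, (e k).1, false, (e k).2))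
      · intro i hi; exact ⟨rfl, rfl, rfl⟩
      · rintro ⟨i, j, b, l⟩ ⟨h1, h2, h3⟩
        refine ⟨i, i.2, ?_⟩
        subst h1 h2 h3
        simp [Nat.mod_eq_of_lt i.2]
      · intro i hi
        refine ⟨?_, Or.inl (Or.inr (Or.inl ⟨rfl, rfl, rfl, rfl, Or.inl ?_⟩))⟩
        · intro hcon
          have := congrArg (fun x => (x.1 : ℕ)) hcon
          simp [Nat.mod_eq_of_lt (Nat.lt_of_succ_lt hi), Nat.mod_eq_of_lt hi] at this
        · simp [Nat.mod_eq_of_lt (Nat.lt_of_succ_lt hi), Nat.mod_eq_of_lt hi]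
    · apply induce_chain_connected (M := M) (hM := hM)
        (f := fun j => ((e k).1, ⟨j % M, Nat.mod_lt _ hM⟩, true, (e k).2))
      · intro i hi; exact ⟨rfl, rfl, rfl⟩
      · rintro ⟨i, j, b, l⟩ ⟨h1, h2, h3⟩
        refine ⟨j, j.2, ?_⟩
        subst h1 h2 h3
        simp [Nat.mod_eq_of_lt j.2]
      · intro j hj
        refine ⟨?_, Or.inl (Or.inr (Or.inr ⟨rfl, rfl, rfl, rfl, Or.inl ?_⟩))⟩
        · intro hcon
          have := congrArg (fun x => (x.2.1 : ℕ)) hcon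
          simp [Nat.mod_eq_of_lt (Nat.lt_of_succ_lt hj), Nat.mod_eq_of_lt hj] at this
        · simp [Nat.mod_eq_of_lt (Nat.lt_of_succ_lt hj), Nat.mod_eq_of_lt hj]
  · rintro (k | k) (k' | k') hadj
    · simp at hadj
    · refine ⟨((e k').1, (e k).1, false, (e k).2), ⟨rfl, rfl, rfl⟩,
        ((e k').1, (e k).1, true, (e k').2), ⟨rfl, rfl, rfl⟩,
        ?_, Or.inl (Or.inl ⟨rfl, rfl, rfl, rfl⟩)⟩
      intro hcon; simpa using congrArg (fun x => x.2.2.1) hcon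
    · refine ⟨((e k).1, (e k').1, true, (e k).2), ⟨rfl, rfl, rfl⟩,
        ((e k).1, (e k').1, false, (e k').2), ⟨rfl, rfl, rfl⟩,
        ?_, Or.inr (Or.inl ⟨rfl, rfl, rfl, rfl⟩)⟩
      intro hcon; simpa using congrArg (fun x => x.2.2.1) hcon
    · simp at hadj
end

section
/- For all positive integers P and L, with M = 2P, the quadripartite template graph Q_{P,L} is a minor of the Chimera graph C_{M,M,L}: U1 is obtained by contracting, for each of the top P rows and each index l, the right vertices of that row over all columns; U2 by contracting, for each column and each index l, the left vertices of the top P rows of that column; U3 by contracting, for each column and each index l, the left vertices of the bottom P rows of that column; and U4 by contracting, for each of the bottom P rows and each index l, the right vertices of that row over all columns. -/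
/-- The vertex set of the quadripartite template graph `Q_{P,L}`:
the four parts `U1, U2, U3, U4` with `|U1| = |U4| = P·L` and `|U2| = |U3| = 2·P·L`. -/
def QVert (P L : ℕ) : Type :=
  Fin (P * L) ⊕ Fin (2 * P * L) ⊕ Fin (2 * P * L) ⊕ Fin (P * L)

/-- The quadripartite template graph `Q_{P,L}`: every vertex of `U1` is adjacent to every
vertex of `U2`, every vertex of `U3` is adjacent to every vertex of `U4`, and the `i`-th
vertex of `U2` is adjacent to the `i`-th vertex of `U3` (a perfect matching). -/
def qte (P L : ℕ) : SimpleGraph (QVert P L) :=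
  SimpleGraph.fromRel fun x y =>
    match x, y with
    | Sum.inl _, Sum.inr (Sum.inl _) => True
    | Sum.inr (Sum.inl i), Sum.inr (Sum.inr (Sum.inl j)) => i = j
    | Sum.inr (Sum.inr (Sum.inl _)), Sum.inr (Sum.inr (Sum.inr _)) => True
    | _, _ => False


/-!
Every vertex of `C_{2P,2P,L}` is sent to a vertex of `Q_{P,L}`: the right vertices with
index `l` in a top (bottom) row go to the `U1` (`U4`) vertex of that row and index, and the
left vertices with index `l` in the top (bottom) half of a column go to the `U2` (`U3`) vertex
of that column and index. The fibers are horizontal paths and vertical half-columns, hence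
connected. The cell edges join each `U1`, `U4` fiber to every `U2`, resp. `U3`, fiber, and the
vertical edge between rows `P - 1` and `P` of a column joins its `U2` and `U3` fibers.
-/

open SimpleGraph

namespace SimpleGraph

variable {V W : Type*} {G : SimpleGraph V} {H : SimpleGraph W}

theorem induce_connected_of_range_eq [Nonempty V] (φ : G →g H) (hG : G.Preconnected)
    {s : Set W} (hs : Set.range φ = s) : (H.induce s).Connected := by
  subst hs
  have : Nonempty (Set.range φ) := (Set.range_nonempty φ).to_subtype
  exact ⟨hG.map ⟨Set.rangeFactorization φ, φ.map_rel⟩ Set.rangeFactorization_surjective⟩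

theorem isMinorOf_of_connected_fibers (g : W → V)
    (hconn : ∀ v, (H.induce (g ⁻¹' {v})).Connected)
    (hedge : ∀ ⦃u v⦄, G.Adj u v → ∃ x y, H.Adj x y ∧ g x = u ∧ g y = v) :
    G.IsMinorOf H :=
  ⟨{ B := fun v => g ⁻¹' {v}
     nonempty := fun v => Set.nonempty_coe_sort.mp (hconn v).nonempty
     pairwiseDisjoint := fun _ _ huv => (Set.disjoint_singleton.mpr huv).preimage g
     connected := hconn
     edge := fun _ _ huv => by
       obtain ⟨x, y, hxy, rfl, rfl⟩ := hedge huv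
       exact ⟨x, rfl, y, rfl, hxy⟩ }⟩

theorem isMinorOf_fromRel_of_connected_fibers {r : V → V → Prop} (g : W → V)
    (hconn : ∀ v, (H.induce (g ⁻¹' {v})).Connected)
    (hedge : ∀ ⦃u v⦄, r u v → ∃ x y, H.Adj x y ∧ g x = u ∧ g y = v) :
    (fromRel r).IsMinorOf H := by
  refine isMinorOf_of_connected_fibers g hconn fun u v huv => ?_
  obtain ⟨-, h | h⟩ := (fromRel_adj ..).mp huv
  · exact hedge h
  · obtain ⟨x, y, hxy, hx, hy⟩ := hedge h
    exact ⟨y, x, hxy.symm, hy, hx⟩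

end SimpleGraph

section Chimera

variable {M L : ℕ}

theorem chimera_adj_cell (i j : Fin M) (l l' : Fin L) :
    (chimera M L).Adj (i, j, false, l) (i, j, true, l') := by
  simp [chimera, fromRel_adj]

@[simps]
def chimeraRow (i : Fin M) (l : Fin L) : pathGraph M →g chimera M L where
  toFun j := (i, j, true, l)
  map_rel' h := by simp [chimera, h.ne, pathGraph_adj.mp h]

@[simps]
def chimeraColumn (j : Fin M) (l : Fin L) : pathGraph M →g chimera M L where
  toFun i := (i, j, false, l)
  map_rel' h := by simp [chimera, h.ne, pathGraph_adj.mp h]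

end Chimera

section Halves

variable (P : ℕ)

def rowHalf : Fin (2 * P) ≃ Fin P ⊕ Fin P :=
  (finCongr (two_mul P)).trans finSumFinEquiv.symm

@[simp]
theorem rowHalf_symm_inl_val (r : Fin P) : ((rowHalf P).symm (.inl r) : ℕ) = r := by
  simp [rowHalf]

@[simp]
theorem rowHalf_symm_inr_val (r : Fin P) : ((rowHalf P).symm (.inr r) : ℕ) = P + r := by
  simp [rowHalf, add_comm]

@[simps]
def topRows : pathGraph P →g pathGraph (2 * P) where
  toFun r := (rowHalf P).symm (.inl r)
  map_rel' h := pathGraph_adj.mpr (by simpa using pathGraph_adj.mp h)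

@[simps]
def bottomRows : pathGraph P →g pathGraph (2 * P) where
  toFun r := (rowHalf P).symm (.inr r)
  map_rel' h := pathGraph_adj.mpr (by simpa [add_assoc] using pathGraph_adj.mp h)

end Halves

/-- The codomain is `QVert P L` unfolded: `simp` does not see through `QVert`, so its lemmas
about `Sum` constructors would not apply to the values of this map otherwise. -/
def chimeraContraction (P L : ℕ) : Fin (2 * P) × Fin (2 * P) × Bool × Fin L →
    Fin (P * L) ⊕ Fin (2 * P * L) ⊕ Fin (2 * P * L) ⊕ Fin (P * L)
  | (i, j, s, l) =>
    match s, rowHalf P i with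
    | true, .inl r => .inl (finProdFinEquiv (r, l))
    | false, .inl _ => .inr (.inl (finProdFinEquiv (j, l)))
    | false, .inr _ => .inr (.inr (.inl (finProdFinEquiv (j, l))))
    | true, .inr r => .inr (.inr (.inr (finProdFinEquiv (r, l))))

variable {P L : ℕ}

section Fibers

theorem chimeraContraction_preimage_topRow (r : Fin P) (l : Fin L) :
    chimeraContraction P L ⁻¹' {.inl (finProdFinEquiv (r, l))} =
      Set.range (chimeraRow ((rowHalf P).symm (.inl r)) l) := by
  ext ⟨i, j, s, l'⟩
  cases s <;> rcases h : rowHalf P i with r' | r' <;>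
    simp [chimeraContraction, h, Equiv.eq_symm_apply, eq_comm]

theorem chimeraContraction_preimage_topColumn (j : Fin (2 * P)) (l : Fin L) :
    chimeraContraction P L ⁻¹' {.inr (.inl (finProdFinEquiv (j, l)))} =
      Set.range ((chimeraColumn j l).comp (topRows P)) := by
  ext ⟨i, j, s, l'⟩
  cases s <;> rcases h : rowHalf P i with r' | r' <;>
    simp [chimeraContraction, h, Equiv.eq_symm_apply, eq_comm]

theorem chimeraContraction_preimage_bottomColumn (j : Fin (2 * P)) (l : Fin L) :
    chimeraContraction P L ⁻¹' {.inr (.inr (.inl (finProdFinEquiv (j, l))))} =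
      Set.range ((chimeraColumn j l).comp (bottomRows P)) := by
  ext ⟨i, j, s, l'⟩
  cases s <;> rcases h : rowHalf P i with r' | r' <;>
    simp [chimeraContraction, h, Equiv.eq_symm_apply, eq_comm]

theorem chimeraContraction_preimage_bottomRow (r : Fin P) (l : Fin L) :
    chimeraContraction P L ⁻¹' {.inr (.inr (.inr (finProdFinEquiv (r, l))))} =
      Set.range (chimeraRow ((rowHalf P).symm (.inr r)) l) := by
  ext ⟨i, j, s, l'⟩
  cases s <;> rcases h : rowHalf P i with r' | r' <;>
    simp [chimeraContraction, h, Equiv.eq_symm_apply, eq_comm]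

theorem chimeraContraction_fiber_connected (v : QVert P L) :
    ((chimera (2 * P) L).induce (chimeraContraction P L ⁻¹' {v})).Connected := by
  rcases v with a | a | a | a <;> obtain ⟨⟨k, l⟩, rfl⟩ := finProdFinEquiv.surjective a
  · have : Nonempty (Fin (2 * P)) := ⟨(rowHalf P).symm (.inl k)⟩
    exact induce_connected_of_range_eq _ (pathGraph_preconnected _)
      (chimeraContraction_preimage_topRow k l).symm
  · have : Nonempty (Fin P) := ⟨(rowHalf P k).elim id id⟩
    exact induce_connected_of_range_eq _ (pathGraph_preconnected _)
      (chimeraContraction_preimage_topColumn k l).symm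
  · have : Nonempty (Fin P) := ⟨(rowHalf P k).elim id id⟩
    exact induce_connected_of_range_eq _ (pathGraph_preconnected _)
      (chimeraContraction_preimage_bottomColumn k l).symm
  · have : Nonempty (Fin (2 * P)) := ⟨(rowHalf P).symm (.inr k)⟩
    exact induce_connected_of_range_eq _ (pathGraph_preconnected _)
      (chimeraContraction_preimage_bottomRow k l).symm

end Fibers

section Edges

theorem chimeraContraction_lifts_topRow_topColumn (a : Fin (P * L)) (b : Fin (2 * P * L)) :
    ∃ x y, (chimera (2 * P) L).Adj x y ∧ chimeraContraction P L x = .inl a ∧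
      chimeraContraction P L y = .inr (.inl b) := by
  obtain ⟨⟨r, l⟩, rfl⟩ := finProdFinEquiv.surjective a
  obtain ⟨⟨j, l'⟩, rfl⟩ := finProdFinEquiv.surjective b
  exact ⟨_, _, (chimera_adj_cell ((rowHalf P).symm (.inl r)) j l' l).symm,
    by simp [chimeraContraction], by simp [chimeraContraction]⟩

theorem chimeraContraction_lifts_topColumn_bottomColumn (a : Fin (2 * P * L)) :
    ∃ x y, (chimera (2 * P) L).Adj x y ∧ chimeraContraction P L x = .inr (.inl a) ∧
      chimeraContraction P L y = .inr (.inr (.inl a)) := by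
  obtain ⟨⟨j, l⟩, rfl⟩ := finProdFinEquiv.surjective a
  have hP : 0 < P := by have := j.pos; omega
  have hadj : (pathGraph (2 * P)).Adj ((rowHalf P).symm (.inl ⟨P - 1, by omega⟩))
      ((rowHalf P).symm (.inr ⟨0, hP⟩)) := by
    simp only [pathGraph_adj, rowHalf_symm_inl_val, rowHalf_symm_inr_val]
    omega
  exact ⟨_, _, (chimeraColumn j l).map_rel hadj, by simp [chimeraContraction],
    by simp [chimeraContraction]⟩

theorem chimeraContraction_lifts_bottomColumn_bottomRow (a : Fin (2 * P * L)) (b : Fin (P * L)) :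
    ∃ x y, (chimera (2 * P) L).Adj x y ∧ chimeraContraction P L x = .inr (.inr (.inl a)) ∧
      chimeraContraction P L y = .inr (.inr (.inr b)) := by
  obtain ⟨⟨j, l⟩, rfl⟩ := finProdFinEquiv.surjective a
  obtain ⟨⟨r, l'⟩, rfl⟩ := finProdFinEquiv.surjective b
  exact ⟨_, _, chimera_adj_cell ((rowHalf P).symm (.inr r)) j l l',
    by simp [chimeraContraction], by simp [chimeraContraction]⟩

end Edges

theorem stmt13_general (P L : ℕ) :
    (qte P L).IsMinorOf (chimera (2 * P) L) := by
  refine isMinorOf_fromRel_of_connected_fibers (chimeraContraction P L)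
    chimeraContraction_fiber_connected ?_
  rintro (a | a | a | a) (b | b | b | b) h <;> cases h
  exacts [chimeraContraction_lifts_topRow_topColumn a b,
    chimeraContraction_lifts_topColumn_bottomColumn a,
    chimeraContraction_lifts_bottomColumn_bottomRow a b]

/-- For all positive integers `P` and `L`, with `M = 2P`, the quadripartite
template graph `Q_{P,L}` is a minor of the Chimera graph `C_{M,M,L}`. -/
theorem stmt13 (P L : ℕ) (hP : 0 < P) (hL : 0 < L) :
    (qte P L).IsMinorOf (chimera (2 * P) L) :=
  stmt13_general P L
end

section
/- Let G be a finite simple graph, let T ⊆ V(G), and suppose the graph G − T is bipartite with bipartition (V1, V2) (every edge of G with neither endpoint in T has one endpoint in V1 and the other in V2). Then G is a minor of the complete bipartite graph K_{|T| + |V1|, |T| + |V2|}: assigning each vertex of T to both parts, each vertex of V1 to the first part, and each vertex of V2 to the second part yields an embedding. -/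
private lemma connected_of_allAdj {W : Type*} {H : SimpleGraph W} {s : Set W}
    (hne : s.Nonempty) (h : ∀ x ∈ s, ∀ y ∈ s, x ≠ y → H.Adj x y) :
    (H.induce s).Connected := by
  rw [SimpleGraph.connected_iff]
  refine ⟨fun x y => ?_, ⟨⟨hne.choose, hne.choose_spec⟩⟩⟩
  by_cases hxy : x = y
  · exact hxy ▸ SimpleGraph.Reachable.refl x
  · exact SimpleGraph.Adj.reachable
      (h x x.2 y y.2 (fun e => hxy (Subtype.ext e)))

/-- If `T ⊆ V(G)` and `G − T` is bipartite with bipartition `(V1, V2)`,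
then `G` is a minor of the complete bipartite graph `K_{|T| + |V1|, |T| + |V2|}`. -/
theorem stmt16 {V : Type*} [Fintype V] (G : SimpleGraph V) (T V1 V2 : Set V)
    (hdisj : Disjoint V1 V2) (hcover : V1 ∪ V2 = Tᶜ)
    (hedge : ∀ ⦃u v : V⦄, G.Adj u v → u ∉ T → v ∉ T →
      (u ∈ V1 ∧ v ∈ V2) ∨ (u ∈ V2 ∧ v ∈ V1)) :
    G.IsMinorOf (completeBipartiteGraph (Fin (T.ncard + V1.ncard))
      (Fin (T.ncard + V2.ncard))) := by
  classical
  have hcard : ∀ (s : Set V), Fintype.card ↥s = s.ncard := fun s => by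
    simp [Set.ncard_eq_toFinset_card', Set.toFinset_card]
  obtain ⟨eL⟩ : Nonempty ((↥T ⊕ ↥V1) ≃ Fin (T.ncard + V1.ncard)) :=
    ⟨Fintype.equivFinOfCardEq (by simp [Fintype.card_sum, hcard])⟩
  obtain ⟨eR⟩ : Nonempty ((↥T ⊕ ↥V2) ≃ Fin (T.ncard + V2.ncard)) :=
    ⟨Fintype.equivFinOfCardEq (by simp [Fintype.card_sum, hcard])⟩
  have hmem2 : ∀ v, v ∉ T → v ∉ V1 → v ∈ V2 := by
    intro v hT h1
    have hc : v ∈ V1 ∪ V2 := hcover.symm ▸ (hT : v ∈ Tᶜ)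
    rw [Set.mem_union] at hc
    tauto
  set B : V → Set (Fin (T.ncard + V1.ncard) ⊕ Fin (T.ncard + V2.ncard)) := fun v =>
    if h : v ∈ T then
      {Sum.inl (eL (Sum.inl ⟨v, h⟩)), Sum.inr (eR (Sum.inl ⟨v, h⟩))}
    else if h1 : v ∈ V1 then
      {Sum.inl (eL (Sum.inr ⟨v, h1⟩)), Sum.inl (eL (Sum.inr ⟨v, h1⟩))}
    else
      {Sum.inr (eR (Sum.inr ⟨v, hmem2 v h h1⟩)),
       Sum.inr (eR (Sum.inr ⟨v, hmem2 v h h1⟩))} with hB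
  refine ⟨⟨B, ?_, ?_, ?_, ?_⟩⟩
  · intro v
    simp only [hB]
    split_ifs <;> simp
  · intro u v huv
    rw [Set.disjoint_left]
    intro x hxu hxv
    simp only [hB] at hxu hxv
    split_ifs at hxu hxv <;>
      simp only [Set.mem_insert_iff, Set.mem_singleton_iff] at hxu hxv <;>
      rcases hxu with rfl | rfl <;> rcases hxv with h | h <;>
      simp only [Sum.inl.injEq, Sum.inr.injEq, EmbeddingLike.apply_eq_iff_eq,
        Subtype.mk.injEq, reduceCtorEq] at h <;>
      exact huv h
  · intro v
    apply connected_of_allAdj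
    · simp only [hB]; split_ifs <;> simp
    · intro x hx y hy hxy
      simp only [hB] at hx hy
      split_ifs at hx hy <;>
        simp only [Set.mem_insert_iff, Set.mem_singleton_iff] at hx hy <;>
        rcases hx with rfl | rfl <;> rcases hy with rfl | rfl <;>
        simp_all [completeBipartiteGraph]
  · intro u v huv
    by_cases hu : u ∈ T
    · by_cases hv : v ∈ T
      · exact ⟨Sum.inl (eL (Sum.inl ⟨u, hu⟩)), by simp [hB, hu],
          Sum.inr (eR (Sum.inl ⟨v, hv⟩)), by simp [hB, hv], by simp⟩
      · by_cases hv1 : v ∈ V1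
        · exact ⟨Sum.inr (eR (Sum.inl ⟨u, hu⟩)), by simp [hB, hu],
            Sum.inl (eL (Sum.inr ⟨v, hv1⟩)), by simp [hB, hv, hv1], by simp⟩
        · exact ⟨Sum.inl (eL (Sum.inl ⟨u, hu⟩)), by simp [hB, hu],
            Sum.inr (eR (Sum.inr ⟨v, hmem2 v hv hv1⟩)), by simp [hB, hv, hv1], by simp⟩
    · by_cases hv : v ∈ T
      · by_cases hu1 : u ∈ V1
        · exact ⟨Sum.inl (eL (Sum.inr ⟨u, hu1⟩)), by simp [hB, hu, hu1],
            Sum.inr (eR (Sum.inl ⟨v, hv⟩)), by simp [hB, hv], by simp⟩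
        · exact ⟨Sum.inr (eR (Sum.inr ⟨u, hmem2 u hu hu1⟩)), by simp [hB, hu, hu1],
            Sum.inl (eL (Sum.inl ⟨v, hv⟩)), by simp [hB, hv], by simp⟩
      · rcases hedge huv hu hv with ⟨hu1, hv2⟩ | ⟨hu2, hv1⟩
        · have hv1 : v ∉ V1 := fun hh => hdisj.ne_of_mem hh hv2 rfl
          exact ⟨Sum.inl (eL (Sum.inr ⟨u, hu1⟩)), by simp [hB, hu, hu1],
            Sum.inr (eR (Sum.inr ⟨v, hmem2 v hv hv1⟩)), by simp [hB, hv, hv1], by simp⟩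
        · have hu1 : u ∉ V1 := fun hh => hdisj.ne_of_mem hh hu2 rfl
          exact ⟨Sum.inr (eR (Sum.inr ⟨u, hmem2 u hu hu1⟩)), by simp [hB, hu, hu1],
            Sum.inl (eL (Sum.inr ⟨v, hv1⟩)), by simp [hB, hv, hv1], by simp⟩
end
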